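/- Let X be a partially ordered set and Fₙ : Xⁿ → X an n-associative function that is idempotent, monotone in its first and last coordinates, and derived from an associative binary function F₂. Then F₂ is monotone in each variable. -/
import Mathlib


/-- The `(k)`-fold iterated composition of a binary operation `f`,
giving a `(k+1)`-ary operation:
`iterComp f k (x₀,…,x_k) = f x₀ (f x₁ (… f x_{k-1} x_k))`. -/
def iterComp {X : Type*} (f : X → X → X) : (k : ℕ) → (Fin (k + 1) → X) → X
  | 0, x => x 0
  | k + 1, x => f (x 0) (iterComp f k (fun i => x i.succ))

/-- `F` (an `n`-ary operation) is derived from the binary operation `f`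
by iterated composition. -/
def DerivedFrom {X : Type*} (f : X → X → X) {n : ℕ} (F : (Fin n → X) → X) : Prop :=
  ∃ h : n - 1 + 1 = n, ∀ x : Fin n → X, F x = iterComp f (n - 1) (fun i => x (Fin.cast h i))

/-- `CompAt F i x` is `F(x₁,…,xᵢ,F(x_{i+1},…,x_{i+n}),x_{i+n+1},…,x_{2n-1})`
(0-indexed: the inner `F` occupies position `i`). -/
def CompAt {X : Type*} {n : ℕ} (F : (Fin n → X) → X) (i : ℕ) (x : ℕ → X) : X :=
  F (fun j => if (j : ℕ) < i then x j
      else if (j : ℕ) = i then F (fun k => x (i + (k : ℕ)))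
      else x ((j : ℕ) + n - 1))

/-- `n`-associativity of an `n`-ary operation. -/
def NAssoc {X : Type*} {n : ℕ} (F : (Fin n → X) → X) : Prop :=
  ∀ x : ℕ → X, ∀ i < n, CompAt F i x = CompAt F 0 x

/-- Idempotency of an `n`-ary operation. -/
def IdemN {X : Type*} {n : ℕ} (F : (Fin n → X) → X) : Prop :=
  ∀ a : X, F (fun _ => a) = a

/-- `e` is a neutral element of the `n`-ary operation `F`. -/
def IsNeutral {X : Type*} {n : ℕ} (F : (Fin n → X) → X) (e : X) : Prop :=
  ∀ (x : X) (i : Fin n), F (Function.update (fun _ => e) i x) = x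

/-- `F` is monotone (order-preserving or order-reversing) in its `i`-th variable. -/
def MonotoneInVar {X : Type*} [Preorder X] {n : ℕ} (F : (Fin n → X) → X) (i : Fin n) : Prop :=
  ∀ a : Fin n → X,
    Monotone (fun t => F (Function.update a i t)) ∨ Antitone (fun t => F (Function.update a i t))

/-- `F` is monotone increasing (order-preserving) in its `i`-th variable. -/
def IncreasingInVar {X : Type*} [Preorder X] {n : ℕ} (F : (Fin n → X) → X) (i : Fin n) : Prop :=
  ∀ a : Fin n → X, Monotone (fun t => F (Function.update a i t))

/-- Associativity of a binary operation. -/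
def Assoc2 {X : Type*} (f : X → X → X) : Prop := ∀ a b c, f (f a b) c = f a (f b c)

/-- A binary operation is monotone (order-preserving or order-reversing) in each variable. -/
def Mono2 {X : Type*} [Preorder X] (f : X → X → X) : Prop :=
  (∀ a, Monotone (f a) ∨ Antitone (f a)) ∧
  (∀ b, Monotone (fun a => f a b) ∨ Antitone (fun a => f a b))

/-- A binary operation is monotone increasing in each variable. -/
def Incr2 {X : Type*} [Preorder X] (f : X → X → X) : Prop :=
  (∀ a, Monotone (f a)) ∧ (∀ b, Monotone (fun a => f a b))

/-- Idempotency of a binary operation. -/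
def Idem2 {X : Type*} (f : X → X → X) : Prop := ∀ x, f x x = x

/-- `e` is a neutral element of a binary operation. -/
def Neutral2 {X : Type*} (f : X → X → X) (e : X) : Prop := ∀ a, f e a = a ∧ f a e = a

/-- The binary operation `F₂(a,b) = Fₙ(a,e,…,e,b)` associated to an `n`-ary operation. -/
def binOf {X : Type*} {n : ℕ} (F : (Fin n → X) → X) (e : X) : X → X → X :=
  fun a b => F (fun j => if (j : ℕ) = 0 then a else if (j : ℕ) = n - 1 then b else e)


theorem iterComp_last {X : Type*} {f : X → X → X} (hf : Assoc2 f) :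
    ∀ (k : ℕ) (x : Fin (k + 1 + 1) → X),
      iterComp f (k + 1) x
        = f (iterComp f k (fun i => x i.castSucc)) (x (Fin.last (k + 1))) := by
  intro k
  induction k with
  | zero =>
    intro x
    show f (x 0) (x 1) = f (x 0) (x (Fin.last 1))
    rfl
  | succ k ih =>
    intro x
    show f (x 0) (iterComp f (k + 1) (fun i => x i.succ)) = _
    rw [ih (fun i => x i.succ), ← hf]
    have h2 : (fun i : Fin (k+1) => x i.castSucc.succ) = (fun i => x i.succ.castSucc) := by
      funext i; rw [Fin.succ_castSucc]
    have e1 : (Fin.last (k+1)).succ = Fin.last (k+1+1) := by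
      ext; simp [Fin.last]
    rw [h2, e1]
    show f (f (x 0) _) _ = f (f (x (0 : Fin (k+1+1)).castSucc) (iterComp f k fun i => x i.succ.castSucc)) _
    congr 2

theorem iterA {X : Type*} {f : X → X → X} (hf : Assoc2 f) (a : X) :
    ∀ k, iterComp f k (fun j : Fin (k+1) => if (j : ℕ) = 0 then f a a else a)
        = iterComp f (k + 1) (fun _ => a) := by
  intro k
  induction k with
  | zero => simp [iterComp]
  | succ k ih =>
    show f (if ((0 : Fin (k+2)) : ℕ) = 0 then f a a else a)
        (iterComp f k (fun i : Fin (k+1) => if ((i.succ : Fin (k+2)) : ℕ) = 0 then f a a else a))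
      = f a (iterComp f (k+1) (fun _ => a))
    rw [if_pos (show ((0 : Fin (k+2)) : ℕ) = 0 by simp)]
    have h1 : (fun i : Fin (k+1) => if ((i.succ : Fin (k+2)) : ℕ) = 0 then f a a else a)
        = (fun _ => a) := by
      funext i; rw [if_neg (by simp [Fin.val_succ])]
    rw [h1]
    show f (f a a) (iterComp f k (fun _ => a)) = f a (f a (iterComp f k (fun _ => a)))
    rw [hf]

theorem iterB {X : Type*} (f : X → X → X) (b : X) :
    ∀ k, iterComp f k (fun j : Fin (k+1) => if (j : ℕ) = k then f b b else b)
        = iterComp f (k + 1) (fun _ => b) := by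
  intro k
  induction k with
  | zero => simp [iterComp]
  | succ k ih =>
    show f (if ((0 : Fin (k+2)) : ℕ) = k+1 then f b b else b)
        (iterComp f k (fun i : Fin (k+1) => if ((i.succ : Fin (k+2)) : ℕ) = k+1 then f b b else b))
      = f b (iterComp f (k+1) (fun _ => b))
    rw [if_neg (by simp)]
    have h1 : (fun i : Fin (k+1) => if ((i.succ : Fin (k+2)) : ℕ) = k+1 then f b b else b)
        = (fun j : Fin (k+1) => if (j : ℕ) = k then f b b else b) := by
      funext i
      simp only [Fin.val_succ]
      by_cases hi : (i : ℕ) = k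
      · rw [if_pos (by omega), if_pos hi]
      · rw [if_neg (by omega), if_neg hi]
    rw [h1, ih]

/-- if `Fₙ` on a poset is `n`-associative, idempotent, monotone in its first
and last coordinates and derived from an associative `f`, then `f` is monotone in each
variable. -/
theorem stmt6 {X : Type*} [PartialOrder X] (f : X → X → X) (hf : Assoc2 f)
    (n : ℕ) (hn : 2 ≤ n) (F : (Fin n → X) → X)
    (hder : DerivedFrom f F) (hNassoc : NAssoc F) (hidem : IdemN F)
    (hfirst : MonotoneInVar F ⟨0, by omega⟩)
    (hlast : MonotoneInVar F ⟨n - 1, by omega⟩) :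
    Mono2 f := by
  obtain ⟨h, hF⟩ := hder
  obtain ⟨k, hk⟩ : ∃ k, n - 1 = k + 1 := ⟨n - 2, by omega⟩
  have hid : ∀ a : X, iterComp f (n-1) (fun _ => a) = a := by
    intro a
    have := hidem a
    rw [hF] at this
    exact this
  constructor
  · intro a
    have key : ∀ t : X,
        F (Function.update (fun j : Fin n => if (j : ℕ) = 0 then f a a else a)
          ⟨n - 1, by omega⟩ t) = f a t := by
      intro t
      rw [hF]
      have hx : (fun i : Fin (n - 1 + 1) =>
          Function.update (fun j : Fin n => if (j : ℕ) = 0 then f a a else a)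
            ⟨n - 1, by omega⟩ t (Fin.cast h i))
          = fun i : Fin (n - 1 + 1) =>
              if (i : ℕ) = n - 1 then t else if (i : ℕ) = 0 then f a a else a := by
        funext i
        rw [Function.update_apply]
        by_cases hi : (i : ℕ) = n - 1
        · rw [if_pos (by ext; simpa using hi), if_pos hi]
        · rw [if_neg (by intro hc; apply hi; simpa using congrArg Fin.val hc), if_neg hi]
          rfl
      rw [hx]
      have hid' := hid a
      rw [hk] at hid' ⊢
      rw [iterComp_last hf k]
      simp only [Fin.coe_castSucc, Fin.val_last, eq_self_iff_true, if_true]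
      have h2 : (fun i : Fin (k+1) =>
            if (i : ℕ) = k + 1 then t else if (i : ℕ) = 0 then f a a else a)
          = fun j : Fin (k+1) => if (j : ℕ) = 0 then f a a else a := by
        funext i
        rw [if_neg i.isLt.ne]
      rw [h2, iterA hf a k, hid']
    rcases hlast (fun j : Fin n => if (j : ℕ) = 0 then f a a else a) with hm | hm
    · left
      intro s t hst
      simpa only [key] using hm hst
    · right
      intro s t hst
      simpa only [key] using hm hst
  · intro b
    have key : ∀ t : X,
        F (Function.update (fun j : Fin n => if (j : ℕ) = n - 1 then f b b else b)
          ⟨0, by omega⟩ t) = f t b := by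
      intro t
      rw [hF]
      have hx : (fun i : Fin (n - 1 + 1) =>
          Function.update (fun j : Fin n => if (j : ℕ) = n - 1 then f b b else b)
            ⟨0, by omega⟩ t (Fin.cast h i))
          = fun i : Fin (n - 1 + 1) =>
              if (i : ℕ) = 0 then t else if (i : ℕ) = n - 1 then f b b else b := by
        funext i
        rw [Function.update_apply]
        by_cases hi : (i : ℕ) = 0
        · rw [if_pos (by ext; simpa using hi), if_pos hi]
        · rw [if_neg (by intro hc; apply hi; simpa using congrArg Fin.val hc), if_neg hi]
          rfl
      rw [hx]
      have hid' := hid b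
      rw [hk] at hid' ⊢
      show f (if ((0 : Fin (k+1+1)) : ℕ) = 0 then t else _)
          (iterComp f k (fun i : Fin (k+1) =>
            if ((i.succ : Fin (k+1+1)) : ℕ) = 0 then t
            else if ((i.succ : Fin (k+1+1)) : ℕ) = k + 1 then f b b else b)) = f t b
      rw [if_pos (show ((0 : Fin (k+2)) : ℕ) = 0 by simp)]
      have h2 : (fun i : Fin (k+1) =>
            if ((i.succ : Fin (k+1+1)) : ℕ) = 0 then t
            else if ((i.succ : Fin (k+1+1)) : ℕ) = k + 1 then f b b else b)
          = fun j : Fin (k+1) => if (j : ℕ) = k then f b b else b := by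
        funext i
        rw [if_neg (by simp [Fin.val_succ])]
        simp only [Fin.val_succ]
        by_cases hi : (i : ℕ) = k
        · rw [if_pos (by omega), if_pos hi]
        · rw [if_neg (by omega), if_neg hi]
      rw [h2, iterB f b k, hid']
    rcases hfirst (fun j : Fin n => if (j : ℕ) = n - 1 then f b b else b) with hm | hm
    · left
      intro s t hst
      simpa only [key] using hm hst
    · right
      intro s t hst
      simpa only [key] using hm hst
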